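/- For γ ∈ (0,1], there is a constant C_γ > 0 such that for all β > 0 and λ > 0, |Σ_{k≥1} [(λ - (πk - 2arctan(πk/β))²)₊^γ - (λ - (πk - 2arctan(π(k-1)/β))²)₊^γ]| ≤ C_γ λ^{γ/2}. -/

import Mathlib

/-!
Write the `k`-th term as `F (a k) - F (b k)` with `F x = (λ - x²)₊^γ`. Then
`πk ≤ a k ≤ b k ≤ π(k+1)`, and the lengths `b k - a k = 2 arctan(π(k+1)/β) - 2 arctan(πk/β)`
telescope to at most `π`. Put `s = √λ`. When `b k ≤ s - π` we have `λ - (b k)² ≥ πs`, so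
concavity of `t ↦ t^γ` bounds the term by `γ (πs)^(γ-1) · 2s (b k - a k)`, and these sum to
`O(s^γ)`. The terms vanish once `a k ≥ s`, so at most two others remain, each at most
`F (s - 2π) ≤ (4πs)^γ`.
-/

open Real Finset

noncomputable def rieszTerm (lam γ x : ℝ) : ℝ := (max (lam - x ^ 2) 0) ^ γ

section rieszTerm

variable {lam γ : ℝ}

lemma rieszTerm_antitoneOn (hγ : 0 ≤ γ) : AntitoneOn (rieszTerm lam γ) (Set.Ici 0) :=
  fun x hx _ _ hxy =>
    rpow_le_rpow (le_max_right _ _) (max_le_max (by nlinarith [Set.mem_Ici.1 hx]) le_rfl) hγ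

lemma rieszTerm_eq_zero {x : ℝ} (hγ : 0 < γ) (hx : √lam ≤ x) : rieszTerm lam γ x = 0 := by
  rw [rieszTerm, max_eq_right (by linarith [(sqrt_le_iff.1 hx).2]), zero_rpow hγ.ne']

lemma rpow_sub_rpow_le_mul_rpow_sub_one {u v : ℝ} (hu : 0 ≤ u) (hv : 0 < v) (hγ0 : 0 ≤ γ)
    (hγ1 : γ ≤ 1) : u ^ γ - v ^ γ ≤ γ * v ^ (γ - 1) * (u - v) := by
  have bernoulli := rpow_one_add_le_one_add_mul_self (s := u / v - 1)
    (by linarith [div_nonneg hu hv.le]) hγ0 hγ1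
  rw [add_sub_cancel, div_rpow hu hv.le, div_le_iff₀ (rpow_pos_of_pos hv γ)] at bernoulli
  calc u ^ γ - v ^ γ ≤ (1 + γ * (u / v - 1)) * v ^ γ - v ^ γ := by linarith
    _ = γ * v ^ (γ - 1) * (u - v) := by rw [rpow_sub_one hv.ne']; field_simp; ring

lemma rieszTerm_sub_le {h a b : ℝ} (hγ0 : 0 ≤ γ) (hγ1 : γ ≤ 1) (hh : 0 < h) (ha : 0 ≤ a)
    (hab : a ≤ b) (hb : b ≤ √lam - h) :
    rieszTerm lam γ a - rieszTerm lam γ b ≤ 2 * γ * h ^ (γ - 1) * √lam ^ γ * (b - a) := by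
  set s := √lam
  have hs : 0 < s := by linarith
  have hlam : s ^ 2 = lam := sq_sqrt (sqrt_pos.1 hs).le
  have hv : h * s ≤ lam - b ^ 2 := by nlinarith
  have hv0 : 0 < lam - b ^ 2 := lt_of_lt_of_le (by positivity) hv
  have hdiff : (lam - a ^ 2) - (lam - b ^ 2) ≤ 2 * s * (b - a) := by nlinarith
  rw [rieszTerm, rieszTerm, max_eq_left (by nlinarith), max_eq_left hv0.le]
  calc (lam - a ^ 2) ^ γ - (lam - b ^ 2) ^ γ
      ≤ γ * (lam - b ^ 2) ^ (γ - 1) * ((lam - a ^ 2) - (lam - b ^ 2)) :=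
        rpow_sub_rpow_le_mul_rpow_sub_one (by nlinarith) hv0 hγ0 hγ1
    _ ≤ γ * (h * s) ^ (γ - 1) * (2 * s * (b - a)) := by
        refine mul_le_mul (mul_le_mul_of_nonneg_left ?_ hγ0) hdiff (by nlinarith) (by positivity)
        exact rpow_le_rpow_of_nonpos (by positivity) hv (by linarith)
    _ = 2 * γ * h ^ (γ - 1) * s ^ γ * (b - a) := by
        rw [mul_rpow hh.le hs.le, rpow_sub_one hs.ne' γ]; field_simp

lemma rieszTerm_le {h a : ℝ} (hγ : 0 ≤ γ) (hlam : 0 ≤ lam) (hh : 0 ≤ h) (ha : 0 ≤ a)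
    (has : √lam - 2 * h ≤ a) : rieszTerm lam γ a ≤ (4 * h) ^ γ * √lam ^ γ := by
  have hs := sqrt_nonneg lam
  have hlam' : √lam ^ 2 = lam := sq_sqrt hlam
  rw [← mul_rpow (by positivity) hs]
  refine rpow_le_rpow (le_max_right _ _) (max_le ?_ (by positivity)) hγ
  rcases le_total a √lam with has' | has'
  · have : √lam - a ≤ 2 * h := by linarith
    nlinarith [mul_le_mul_of_nonneg_right this (by linarith : 0 ≤ √lam + a)]
  · nlinarith

theorem abs_tsum_rieszTerm_sub_le {h D : ℝ} {a b : ℕ → ℝ} (hγ0 : 0 < γ) (hγ1 : γ ≤ 1)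
    (hlam : 0 ≤ lam) (hh : 0 < h) (ha : ∀ k : ℕ, h * k ≤ a k) (hab : ∀ k, a k ≤ b k)
    (hb : ∀ k : ℕ, b k ≤ h * (k + 1)) (hD : ∀ n, ∑ k ∈ range n, (b k - a k) ≤ D) :
    |∑' k, (rieszTerm lam γ (a k) - rieszTerm lam γ (b k))|
      ≤ (2 * γ * h ^ (γ - 1) * D + 2 * (4 * h) ^ γ) * lam ^ (γ / 2) := by
  set s := √lam
  set N := ⌈s / h⌉₊
  have ha0 : ∀ k, 0 ≤ a k := fun k => le_trans (by positivity) (ha k)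
  have hvanish : ∀ k ∉ range N, rieszTerm lam γ (a k) - rieszTerm lam γ (b k) = 0 := by
    intro k hk
    have hsk : s ≤ a k := by
      have := Nat.ceil_le.1 (not_lt.1 (mem_range.not.1 hk))
      rw [div_le_iff₀ hh] at this
      linarith [ha k]
    rw [rieszTerm_eq_zero hγ0 hsk, rieszTerm_eq_zero hγ0 (hsk.trans (hab k)), sub_zero]
  have hbulk : ∑ k ∈ range (N - 2), (rieszTerm lam γ (a k) - rieszTerm lam γ (b k))
      ≤ 2 * γ * h ^ (γ - 1) * s ^ γ * D := by
    calc _ ≤ ∑ k ∈ range (N - 2), 2 * γ * h ^ (γ - 1) * s ^ γ * (b k - a k) := by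
          refine sum_le_sum fun k hk => rieszTerm_sub_le hγ0.le hγ1 hh (ha0 k) (hab k) ?_
          have := Nat.lt_ceil.1 (Nat.add_lt_of_lt_sub (mem_range.1 hk))
          rw [lt_div_iff₀ hh] at this
          push_cast at this
          linarith [hb k]
      _ ≤ 2 * γ * h ^ (γ - 1) * s ^ γ * D := by rw [← mul_sum]; gcongr; exact hD _
  have hedge : ∑ k ∈ Ico (N - 2) N, (rieszTerm lam γ (a k) - rieszTerm lam γ (b k))
      ≤ 2 * ((4 * h) ^ γ * s ^ γ) := by
    calc _ ≤ ∑ k ∈ Ico (N - 2) N, (4 * h) ^ γ * s ^ γ := by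
          refine sum_le_sum fun k hk => ?_
          have := Nat.ceil_le.1 (Nat.sub_le_iff_le_add.1 (mem_Ico.1 hk).1)
          rw [div_le_iff₀ hh] at this
          push_cast at this
          have hF := rieszTerm_le hγ0.le hlam hh.le (ha0 k) (by linarith [ha k])
          have hFb : 0 ≤ rieszTerm lam γ (b k) := rpow_nonneg (le_max_right _ _) γ
          linarith
      _ ≤ 2 * ((4 * h) ^ γ * s ^ γ) := by
          rw [sum_const, nsmul_eq_mul, Nat.card_Ico]
          gcongr
          exact_mod_cast (by omega : N - (N - 2) ≤ 2)
  have hsγ : s ^ γ = lam ^ (γ / 2) := by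
    rw [show s = lam ^ (1 / 2 : ℝ) from sqrt_eq_rpow lam, ← rpow_mul hlam]; ring_nf
  rw [abs_of_nonneg (tsum_nonneg fun k => sub_nonneg.2 <|
      rieszTerm_antitoneOn hγ0.le (ha0 k) ((ha0 k).trans (hab k)) (hab k)),
    tsum_eq_sum hvanish, ← sum_range_add_sum_Ico _ (Nat.sub_le N 2), ← hsγ]
  linarith

end rieszTerm

theorem riesz_arctan_difference_bound
    (γ : ℝ) (hγ : γ ∈ Set.Ioc (0:ℝ) 1) :
    ∃ C : ℝ, 0 < C ∧ ∀ β : ℝ, 0 < β → ∀ lam : ℝ, 0 < lam →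
      |∑' k : ℕ,
          ((max (lam - (Real.pi * (k + 1)
              - 2 * Real.arctan (Real.pi * (k + 1) / β)) ^ 2) 0) ^ γ
            - (max (lam - (Real.pi * (k + 1)
              - 2 * Real.arctan (Real.pi * (k : ℝ) / β)) ^ 2) 0) ^ γ)|
        ≤ C * lam ^ (γ / 2) := by
  obtain ⟨hγ0, hγ1⟩ := hγ
  refine ⟨2 * γ * π ^ (γ - 1) * π + 2 * (4 * π) ^ γ, by positivity, fun β hβ lam hlam => ?_⟩
  have harctan_le : ∀ k : ℕ, arctan (π * k / β) ≤ arctan (π * (k + 1) / β) :=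
    fun k => arctan_mono (by gcongr; linarith)
  have harctan_nonneg : ∀ k : ℕ, 0 ≤ arctan (π * k / β) :=
    fun k => by positivity
  have htelescope : ∀ n : ℕ, ∑ k ∈ range n, ((π * (k + 1) - 2 * arctan (π * k / β))
      - (π * (k + 1) - 2 * arctan (π * (k + 1) / β))) ≤ π := fun n => by
    have := sum_range_sub (fun k : ℕ => 2 * arctan (π * k / β)) n
    push_cast at this
    simp only [sub_sub_sub_cancel_left, this, mul_zero, zero_div, arctan_zero]
    linarith [arctan_lt_pi_div_two (π * n / β)]
  exact abs_tsum_rieszTerm_sub_le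
    (a := fun k : ℕ => π * (k + 1) - 2 * arctan (π * (k + 1) / β))
    (b := fun k : ℕ => π * (k + 1) - 2 * arctan (π * k / β)) hγ0 hγ1 hlam.le pi_pos
    (fun k => by linarith [arctan_lt_pi_div_two (π * (k + 1) / β)])
    (fun k => by linarith [harctan_le k]) (fun k => by linarith [harctan_nonneg k]) htelescope
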